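/- arXiv:2004.08964 — 4 statements merged into one kernel-verified Lean document; each statement's English description precedes it below -/
import Mathlib

section
/- Let C be a regular category. Consider morphisms k : A ⟶ B, l : B ⟶ C, a : A ⟶ A', b : B ⟶ B', c : C ⟶ C', k' : A' ⟶ B', l' : B' ⟶ C' with k' ∘ a = b ∘ k and l' ∘ b = c ∘ l. If the left-hand square (with sides k, a, b, k') is a pullback, the outer rectangle (with sides l ∘ k, a, c, l' ∘ k') is a pullback, and k' is a regular epimorphism, then the right-hand square (with sides l, b, c, l') is a pullback. -/
open CategoryTheory Limits

/-- In a regular category, given two composable commutative squares where the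
left-hand square and the outer rectangle are pullbacks and `k'` is a regular
epimorphism, the right-hand square is a pullback. -/
theorem stmt_11 {𝒞 : Type*} [Category 𝒞] [HasFiniteLimits 𝒞]
    (hcoeq : ∀ {X Y : 𝒞} (f : X ⟶ Y),
      HasCoequalizer (pullback.fst f f) (pullback.snd f f))
    (hstab : ∀ ⦃P X Y Z : 𝒞⦄ (fst : P ⟶ X) (snd : P ⟶ Y) (f : X ⟶ Z) (g : Y ⟶ Z),
      IsPullback fst snd f g → Nonempty (RegularEpi g) → Nonempty (RegularEpi fst))
    {A B D A' B' D' : 𝒞} (k : A ⟶ B) (l : B ⟶ D) (a : A ⟶ A') (b : B ⟶ B')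
    (c : D ⟶ D') (k' : A' ⟶ B') (l' : B' ⟶ D')
    (w1 : a ≫ k' = k ≫ b) (w2 : b ≫ l' = l ≫ c)
    (h1 : IsPullback k a b k') (h2 : IsPullback (k ≫ l) a c (k' ≫ l'))
    (hk' : RegularEpi k') :
    IsPullback l b c l' := by
  -- the comparison map into the pullback of `c` and `l'`
  let u : B ⟶ pullback c l' := pullback.lift l b w2.symm
  have hufst : u ≫ pullback.fst c l' = l := pullback.lift_fst _ _ _
  have husnd : u ≫ pullback.snd c l' = b := pullback.lift_snd _ _ _
  -- the square (k ≫ u, a, snd, k') is a pullback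
  have S : IsPullback (k ≫ u) a (pullback.snd c l') k' := by
    apply IsPullback.of_right (h₁₂ := pullback.fst c l') (v₁₃ := c) (h₂₂ := l')
    · rw [Category.assoc, hufst]; exact h2
    · rw [Category.assoc, husnd, ← w1]
    · exact IsPullback.of_hasPullback c l'
  -- hence `k ≫ u` is a regular epi, so `u` is a strong epi
  have hr : RegularEpi (k ≫ u) :=
    (hstab (k ≫ u) a (pullback.snd c l') k' S ⟨hk'⟩).some
  haveI : StrongEpi (k ≫ u) := by have := isRegularEpi_of_regularEpi hr; infer_instance
  haveI hu_strong : StrongEpi u := strongEpi_of_strongEpi k u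
  -- `k` is a regular epi (pullback of `k'`)
  have hk : RegularEpi k := (hstab k a b k' h1 ⟨hk'⟩).some
  -- `u` is a mono
  haveI : Mono u := by
    constructor
    intro T x y h
    have hb : x ≫ b = y ≫ b := by
      rw [← husnd, ← Category.assoc, h, Category.assoc]
    have hl : x ≫ l = y ≫ l := by
      rw [← hufst, ← Category.assoc, h, Category.assoc]
    -- pull `k` back along `x`
    let Q := pullback x k
    let e : Q ⟶ T := pullback.fst x k
    let w : Q ⟶ A := pullback.snd x k
    have hew : e ≫ x = w ≫ k := pullback.condition
    haveI : Epi e := RegularEpi.epi e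
      (hstab e w x k (IsPullback.of_hasPullback x k) ⟨hk⟩).some
    -- lift against the left-hand pullback square
    have hcone : (e ≫ y) ≫ b = (w ≫ a) ≫ k' := by
      rw [Category.assoc, ← hb, ← Category.assoc, hew]
      simp only [Category.assoc, w1]
    let v : Q ⟶ A := h1.lift (e ≫ y) (w ≫ a) hcone
    have hvk : v ≫ k = e ≫ y := h1.lift_fst _ _ _
    have hva : v ≫ a = w ≫ a := h1.lift_snd _ _ _
    have hvw : v = w := by
      apply h2.hom_ext
      · rw [← Category.assoc, hvk, Category.assoc, ← hl, ← Category.assoc, hew,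
          Category.assoc]
      · exact hva
    have : e ≫ x = e ≫ y := by rw [hew, ← hvw, hvk]
    exact (cancel_epi e).mp this
  haveI : IsIso u := isIso_of_mono_of_strongEpi u
  exact IsPullback.of_iso_pullback ⟨w2.symm⟩ (asIso u) hufst husnd
end

section
/- (Barr–Kock Theorem) Let C be a regular category. Let f : A ⟶ X be a regular epimorphism, and let u : A ⟶ B, g : B ⟶ Y, w : X ⟶ Y be morphisms with w ∘ f = g ∘ u. Let (Eq(f), p₁, p₂) be the kernel pair of f, (Eq(g), q₁, q₂) the kernel pair of g, and v : Eq(f) ⟶ Eq(g) the unique morphism with q₁ ∘ v = u ∘ p₁ and q₂ ∘ v = u ∘ p₂. If the square with sides p₁, v, u, q₁ is a pullback, then the square with sides f, u, w, g is a pullback. -/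
open CategoryTheory Limits

/-!
The comparison map `h : A ⟶ pullback w g` is a monomorphism, because the pullback hypothesis
makes `f` and `u` jointly monic. Pasting the hypothesis square with the kernel-pair square of `g`
shows that `p₂ ≫ h` is a pullback of the regular epimorphism `f`, hence a regular epimorphism;
so `h` is a strong epimorphism and a monomorphism, i.e. an isomorphism.
-/

section KernelPair

variable {C : Type*} [Category C] {A B X Y : C} {f : A ⟶ X} {u : A ⟶ B} {g : B ⟶ Y}
  [HasPullback f f] [HasPullback g g] {v : pullback f f ⟶ pullback g g}

theorem eq_of_isPullback_kernelPair (hv : v ≫ pullback.snd g g = pullback.snd f f ≫ u)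
    (hpb : IsPullback (pullback.fst f f) v u (pullback.fst g g)) {T : C} {x y : T ⟶ A}
    (hf : x ≫ f = y ≫ f) (hu : x ≫ u = y ≫ u) : x = y := by
  have hlift : pullback.lift x y hf = pullback.lift x x rfl := by
    apply hpb.hom_ext
    · simp only [pullback.lift_fst]
    · apply pullback.hom_ext
      · simp only [Category.assoc, ← hpb.w, pullback.lift_fst_assoc]
      · simp only [Category.assoc, hv, pullback.lift_snd_assoc, hu]
  simpa only [pullback.lift_snd] using (hlift =≫ pullback.snd f f).symm

variable {w : X ⟶ Y} [HasPullback w g] (hcomm : f ≫ w = u ≫ g)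
  (hv : v ≫ pullback.snd g g = pullback.snd f f ≫ u)
  (hpb : IsPullback (pullback.fst f f) v u (pullback.fst g g))
include hv hpb

theorem mono_pullbackLift_of_isPullback_kernelPair : Mono (pullback.lift f u hcomm) :=
  ⟨fun x y hxy => eq_of_isPullback_kernelPair hv hpb
    (by simpa only [Category.assoc, pullback.lift_fst] using hxy =≫ pullback.fst w g)
    (by simpa only [Category.assoc, pullback.lift_snd] using hxy =≫ pullback.snd w g)⟩

theorem isPullback_kernelPair_fst_snd_comp_pullbackLift :
    IsPullback (pullback.fst f f) (pullback.snd f f ≫ pullback.lift f u hcomm) f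
      (pullback.fst w g) := by
  have hpaste : IsPullback (pullback.fst f f) (pullback.snd f f ≫ u) (f ≫ w) g := by
    simpa only [hv, hcomm] using hpb.paste_vert (IsPullback.of_hasPullback g g)
  refine IsPullback.of_bot ?_ ?_ (IsPullback.of_hasPullback w g)
  · simpa only [Category.assoc, pullback.lift_snd] using hpaste
  · simp only [Category.assoc, pullback.lift_fst, pullback.condition]

end KernelPair

/-- The Barr–Kock theorem: in a regular category, given a regular epimorphism
`f : A ⟶ X` and morphisms `u : A ⟶ B`, `g : B ⟶ Y`, `w : X ⟶ Y` with
`w ∘ f = g ∘ u`, if the induced square between the first kernel pair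
projections of `f` and `g` is a pullback, then the square `(f, u, w, g)`
is a pullback. -/
theorem stmt_12 {C : Type*} [Category C] [HasFiniteLimits C]
    (hstab : ∀ ⦃P X Y Z : C⦄ (fst : P ⟶ X) (snd : P ⟶ Y) (f : X ⟶ Z) (g : Y ⟶ Z),
      IsPullback fst snd f g → Nonempty (RegularEpi g) → Nonempty (RegularEpi fst))
    {A B X Y : C} (f : A ⟶ X) (_ : RegularEpi f) (u : A ⟶ B) (g : B ⟶ Y) (w : X ⟶ Y)
    (hcomm : f ≫ w = u ≫ g)
    (v : pullback f f ⟶ pullback g g)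
    (hv2 : v ≫ pullback.snd g g = pullback.snd f f ≫ u)
    (hpb : IsPullback (pullback.fst f f) v u (pullback.fst g g)) :
    IsPullback f u w g := by
  have := mono_pullbackLift_of_isPullback_kernelPair hcomm hv2 hpb
  obtain ⟨hreg⟩ := hstab _ _ _ _
    (isPullback_kernelPair_fst_snd_comp_pullbackLift hcomm hv2 hpb).flip ⟨‹RegularEpi f›⟩
  have := isRegularEpi_of_regularEpi hreg
  have := strongEpi_of_strongEpi (pullback.snd f f) (pullback.lift f u hcomm)
  have := isIso_of_mono_of_strongEpi (pullback.lift f u hcomm)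
  exact IsPullback.of_iso_pullback ⟨hcomm⟩ (asIso (pullback.lift f u hcomm))
    (pullback.lift_fst _ _ _) (pullback.lift_snd _ _ _)
end

section
/- Let M be a set with a binary operation · satisfying (x·y)·x = x, (x·y)·y = (y·x)·x, and x·(y·z) = y·(x·z) for all x, y, z ∈ M (i.e., M is an implication algebra). Then: (i) x·x = y·y for all x, y ∈ M (so x·x is a constant, denoted 1); (ii) (x·x)·y = y for all x, y ∈ M; (iii) the quaternary terms p(x, y, z, u) = (z·y)·x and q(x, y, z, u) = (y·z)·u satisfy p(x, y, y, z) = x, q(x, y, y, z) = z, and p(x, x, z, z) = q(x, x, z, z) for all x, y, z ∈ M. -/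
/-- In an implication algebra: (i) `x·x` is a constant; (ii) `(x·x)·y = y`;
(iii) the quaternary terms `p (x,y,z,u) = (z·y)·x` and `q (x,y,z,u) = (y·z)·u`
satisfy `p (x,y,y,z) = x`, `q (x,y,y,z) = z` and `p (x,x,z,z) = q (x,x,z,z)`. -/
theorem stmt_17 {M : Type*} (op : M → M → M)
    (hA : ∀ x y : M, op (op x y) x = x)
    (hB : ∀ x y : M, op (op x y) y = op (op y x) x)
    (hC : ∀ x y z : M, op x (op y z) = op y (op x z)) :
    (∀ x y : M, op x x = op y y) ∧
    (∀ x y : M, op (op x x) y = y) ∧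
    (∀ x y z : M, op (op y y) x = x ∧ op (op y y) z = z) ∧
    (∀ x z : M, op (op z x) x = op (op x z) z) := by
  -- L1 : x·(x·y) = x·y
  have L1 : ∀ x y : M, op x (op x y) = op x y := by
    intro x y
    have h := hA (op x y) x
    rwa [hA x y] at h
  -- star : x·y = (y·x)·(x·y)
  have star : ∀ x y : M, op x y = op (op y x) (op x y) := by
    intro x y
    conv_lhs => rw [← hA y x]
    exact hC x (op y x) y
  -- dstar : (x·y)·(y·x) = y·x
  have dstar : ∀ x y : M, op (op x y) (op y x) = op y x := by
    intro x y
    have := hA (op y x) (op x y)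
    rwa [← star x y] at this
  -- L2 : x·x = (x·y)·(x·y)
  have L2 : ∀ x y : M, op x x = op (op x y) (op x y) := by
    intro x y
    have h := hB (op x y) x
    rwa [hA x y, L1] at h
  -- (i)
  have const : ∀ x y : M, op x x = op y y := by
    intro x y
    have h1 := L2 x y
    have h2 := L2 (op x y) (op y x)
    rw [dstar x y] at h2
    rw [h1, h2, ← L2 y x]
  have unit : ∀ x y : M, op (op x x) y = y := by
    intro x y
    rw [const x y]
    exact hA y y
  exact ⟨const, unit, fun x y z => ⟨unit y x, unit y z⟩, fun x z => hB z x⟩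
end

section
/- Let A be a set equipped with quaternary operations p, q : A⁴ → A satisfying p(x, y, y, z) = x, q(x, y, y, z) = z, and p(x, x, y, y) = q(x, x, y, y) for all x, y, z ∈ A. Let R and S be equivalence relations on A compatible with p and q (i.e., if R aᵢ bᵢ for i = 1, 2, 3, 4 then R (p a₁ a₂ a₃ a₄) (p b₁ b₂ b₃ b₄) and R (q a₁ a₂ a₃ a₄) (q b₁ b₂ b₃ b₄), and similarly for S). Then R, S 3-permute: for all a, b ∈ A, there exist x, y with R a x, S x y, R y b if and only if there exist x', y' with S a x', R x' y', S y' b; that is, R ∘ S ∘ R = S ∘ R ∘ S as relations. -/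
private lemma stmt_19_aux {A : Type*} (p q : A → A → A → A → A)
    (hp : ∀ x y z : A, p x y y z = x)
    (hq : ∀ x y z : A, q x y y z = z)
    (hpq : ∀ x y : A, p x x y y = q x x y y)
    (R S : A → A → Prop) (hR : Equivalence R) (hS : Equivalence S)
    (hRcomp : ∀ a₁ a₂ a₃ a₄ b₁ b₂ b₃ b₄ : A,
      R a₁ b₁ → R a₂ b₂ → R a₃ b₃ → R a₄ b₄ →
      R (p a₁ a₂ a₃ a₄) (p b₁ b₂ b₃ b₄) ∧ R (q a₁ a₂ a₃ a₄) (q b₁ b₂ b₃ b₄))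
    (hScomp : ∀ a₁ a₂ a₃ a₄ b₁ b₂ b₃ b₄ : A,
      S a₁ b₁ → S a₂ b₂ → S a₃ b₃ → S a₄ b₄ →
      S (p a₁ a₂ a₃ a₄) (p b₁ b₂ b₃ b₄) ∧ S (q a₁ a₂ a₃ a₄) (q b₁ b₂ b₃ b₄))
    (a b : A) : (∃ x y, R a x ∧ S x y ∧ R y b) → (∃ x y, S a x ∧ R x y ∧ S y b) := by
  rintro ⟨x, y, hax, hxy, hyb⟩
  refine ⟨p a x y b, q a x y b, ?_, ?_, ?_⟩
  · have h := (hScomp a x y b a y y b (hS.refl a) hxy (hS.refl y) (hS.refl b)).1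
    rw [hp] at h
    exact hS.symm h
  · have h1 := (hRcomp a x y b x x b b hax (hR.refl x) hyb (hR.refl b)).1
    have h2 := (hRcomp a x y b x x b b hax (hR.refl x) hyb (hR.refl b)).2
    rw [hpq] at h1
    exact hR.trans h1 (hR.symm h2)
  · have h := (hScomp a x y b a y y b (hS.refl a) hxy (hS.refl y) (hS.refl b)).2
    rw [hq] at h
    exact h

/-- If a set carries quaternary operations `p`, `q` with `p x y y z = x`,
`q x y y z = z`, `p x x y y = q x x y y`, then any two equivalence relations
compatible with `p` and `q` (congruences) 3-permute: `R ∘ S ∘ R = S ∘ R ∘ S`. -/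
theorem stmt_19 {A : Type*} (p q : A → A → A → A → A)
    (hp : ∀ x y z : A, p x y y z = x)
    (hq : ∀ x y z : A, q x y y z = z)
    (hpq : ∀ x y : A, p x x y y = q x x y y)
    (R S : A → A → Prop) (hR : Equivalence R) (hS : Equivalence S)
    (hRcomp : ∀ a₁ a₂ a₃ a₄ b₁ b₂ b₃ b₄ : A,
      R a₁ b₁ → R a₂ b₂ → R a₃ b₃ → R a₄ b₄ →
      R (p a₁ a₂ a₃ a₄) (p b₁ b₂ b₃ b₄) ∧ R (q a₁ a₂ a₃ a₄) (q b₁ b₂ b₃ b₄))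
    (hScomp : ∀ a₁ a₂ a₃ a₄ b₁ b₂ b₃ b₄ : A,
      S a₁ b₁ → S a₂ b₂ → S a₃ b₃ → S a₄ b₄ →
      S (p a₁ a₂ a₃ a₄) (p b₁ b₂ b₃ b₄) ∧ S (q a₁ a₂ a₃ a₄) (q b₁ b₂ b₃ b₄)) :
    ∀ a b : A, (∃ x y, R a x ∧ S x y ∧ R y b) ↔ (∃ x y, S a x ∧ R x y ∧ S y b) := by
  intro a b
  exact ⟨stmt_19_aux p q hp hq hpq R S hR hS hRcomp hScomp a b,
         stmt_19_aux p q hp hq hpq S R hS hR hScomp hRcomp a b⟩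
end
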